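/- Fix ε > 0. Let η¹, η², ηᵐⁱⁿ, ηᵐᵃˣ : ℤ → ℤ take values in {0,1} and satisfy, for every x ∈ ℤ, ηᵐⁱⁿ(x) ≤ min(η¹(x), η²(x)) and max(η¹(x), η²(x)) ≤ ηᵐᵃˣ(x). Let h¹, h², hᵐⁱⁿ, hᵐᵃˣ : ℤ → ℤ be height functions for the respective configurations, i.e. h(x) − h(x−1) = 2η(x) − 1 for the corresponding η and all x ∈ ℤ. Define f : ℝ → ℝ by f(x) = √ε·(h¹(⌊ε⁻¹x⌋) − h²(⌊ε⁻¹x⌋)). Then for all real numbers a ≤ b, the total variation of f on [a, b] is at most √ε·[(hᵐᵃˣ(⌊ε⁻¹b⌋) − hᵐᵃˣ(⌊ε⁻¹a⌋)) − (hᵐⁱⁿ(⌊ε⁻¹b⌋) − hᵐⁱⁿ(⌊ε⁻¹a⌋))]. -/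

import Mathlib

/-!
Along the lattice, the increment of `h₁ - h₂` at `x` is `2 (η₁ x - η₂ x)` and that of
`hmax - hmin` is `2 (ηmax x - ηmin x)`; the sandwich condition gives
`|η₁ x - η₂ x| = max - min ≤ ηmax x - ηmin x`. Summing, `hmax - hmin` is nondecreasing and
dominates every increment of `h₁ - h₂`, so after rescaling the variation of the difference
over `[a, b]` is bounded by the increment of the rescaled `hmax - hmin` between `a` and `b`.
-/

open Set

theorem abs_sub_le_sub_of_le_min_of_max_le {α : Type*} [AddCommGroup α] [LinearOrder α]
    [IsOrderedAddMonoid α] {a b c d : α} (hc : c ≤ min a b) (hd : max a b ≤ d) :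
    |a - b| ≤ d - c := by
  rw [← max_sub_min_eq_abs']
  exact sub_le_sub hd hc

theorem Int.abs_sub_le_sub_of_abs_sub_pred_le {α : Type*} [AddCommGroup α] [LinearOrder α]
    [IsOrderedAddMonoid α] {g G : ℤ → α} (h : ∀ n, |g n - g (n - 1)| ≤ G n - G (n - 1))
    {m n : ℤ} (hmn : m ≤ n) : |g n - g m| ≤ G n - G m := by
  induction n, hmn using Int.leInduction with
  | base => simp
  | succ n _ ih =>
    have step := h (n + 1)
    rw [add_sub_cancel_right] at step
    calc |g (n + 1) - g m| ≤ |g (n + 1) - g n| + |g n - g m| := abs_sub_le _ _ _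
      _ ≤ (G (n + 1) - G n) + (G n - G m) := add_le_add step ih
      _ = G (n + 1) - G m := sub_add_sub_cancel _ _ _

theorem eVariationOn_le_of_edist_le {α E F : Type*} [LinearOrder α] [PseudoEMetricSpace E]
    [PseudoEMetricSpace F] {f : α → E} {g : α → F} {s : Set α}
    (h : ∀ x ∈ s, ∀ y ∈ s, edist (f x) (f y) ≤ edist (g x) (g y)) :
    eVariationOn f s ≤ eVariationOn g s :=
  iSup_mono fun p => Finset.sum_le_sum fun _ _ => h _ (p.2.2.2 _) _ (p.2.2.2 _)

theorem eVariationOn_Icc_le_of_abs_sub_le {α : Type*} [LinearOrder α] {f F : α → ℝ} {a b : α}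
    (hab : a ≤ b) (h : ∀ x ∈ Icc a b, ∀ y ∈ Icc a b, x ≤ y → |f y - f x| ≤ F y - F x) :
    eVariationOn f (Icc a b) ≤ ENNReal.ofReal (F b - F a) := by
  have hF : MonotoneOn F (Icc a b) := fun x hx y hy hxy =>
    sub_nonneg.1 ((abs_nonneg _).trans (h x hx y hy hxy))
  have hdom : ∀ x ∈ Icc a b, ∀ y ∈ Icc a b, x ≤ y → edist (f x) (f y) ≤ edist (F x) (F y) := by
    intro x hx y hy hxy
    rw [edist_comm, edist_comm (F x), edist_dist, edist_dist, Real.dist_eq, Real.dist_eq]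
    exact ENNReal.ofReal_le_ofReal ((h x hx y hy hxy).trans (le_abs_self _))
  calc eVariationOn f (Icc a b) ≤ eVariationOn F (Icc a b) := by
        refine eVariationOn_le_of_edist_le fun x hx y hy => ?_
        rcases le_total x y with hxy | hyx
        · exact hdom x hx y hy hxy
        · rw [edist_comm, edist_comm (F x)]
          exact hdom y hy x hx hyx
    _ ≤ ENNReal.ofReal (F b - F a) := by
        simpa only [inter_self] using (hF.eVariationOn_eq ⟨le_rfl, hab⟩ ⟨hab, le_rfl⟩).le

theorem abs_height_diff_increment_le {η₁ η₂ ηmin ηmax h₁ h₂ hmin hmax : ℤ → ℤ} {x : ℤ}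
    (hsand : ηmin x ≤ min (η₁ x) (η₂ x) ∧ max (η₁ x) (η₂ x) ≤ ηmax x)
    (hh₁ : h₁ x - h₁ (x - 1) = 2 * η₁ x - 1) (hh₂ : h₂ x - h₂ (x - 1) = 2 * η₂ x - 1)
    (hhmin : hmin x - hmin (x - 1) = 2 * ηmin x - 1)
    (hhmax : hmax x - hmax (x - 1) = 2 * ηmax x - 1) :
    |(h₁ x - h₂ x) - (h₁ (x - 1) - h₂ (x - 1))| ≤
      (hmax x - hmin x) - (hmax (x - 1) - hmin (x - 1)) := by
  have hη := abs_sub_le_sub_of_le_min_of_max_le hsand.1 hsand.2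
  calc |(h₁ x - h₂ x) - (h₁ (x - 1) - h₂ (x - 1))| = 2 * |η₁ x - η₂ x| := by
        rw [← abs_two, ← abs_mul]; congr 1; linarith
    _ ≤ 2 * (ηmax x - ηmin x) := by gcongr
    _ = (hmax x - hmin x) - (hmax (x - 1) - hmin (x - 1)) := by linarith

theorem eVariationOn_rescaled_height_diff_le_general
    (ε : ℝ) (hε : 0 < ε)
    (η₁ η₂ ηmin ηmax : ℤ → ℤ)
    (hsand : ∀ x : ℤ, ηmin x ≤ min (η₁ x) (η₂ x) ∧ max (η₁ x) (η₂ x) ≤ ηmax x)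
    (h₁ h₂ hmin hmax : ℤ → ℤ)
    (hh₁ : ∀ x : ℤ, h₁ x - h₁ (x - 1) = 2 * η₁ x - 1)
    (hh₂ : ∀ x : ℤ, h₂ x - h₂ (x - 1) = 2 * η₂ x - 1)
    (hhmin : ∀ x : ℤ, hmin x - hmin (x - 1) = 2 * ηmin x - 1)
    (hhmax : ∀ x : ℤ, hmax x - hmax (x - 1) = 2 * ηmax x - 1)
    (a b : ℝ) (hab : a ≤ b) :
    eVariationOn
        (fun x : ℝ => Real.sqrt ε * ((h₁ ⌊ε⁻¹ * x⌋ : ℝ) - (h₂ ⌊ε⁻¹ * x⌋ : ℝ)))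
        (Set.Icc a b) ≤
      ENNReal.ofReal (Real.sqrt ε *
        (((hmax ⌊ε⁻¹ * b⌋ : ℝ) - (hmax ⌊ε⁻¹ * a⌋ : ℝ))
          - ((hmin ⌊ε⁻¹ * b⌋ : ℝ) - (hmin ⌊ε⁻¹ * a⌋ : ℝ)))) := by
  have hlattice {m n : ℤ} (hmn : m ≤ n) :
      |(h₁ n - h₂ n) - (h₁ m - h₂ m)| ≤ (hmax n - hmin n) - (hmax m - hmin m) :=
    Int.abs_sub_le_sub_of_abs_sub_pred_le (fun x => abs_height_diff_increment_le (hsand x)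
      (hh₁ x) (hh₂ x) (hhmin x) (hhmax x)) hmn
  convert eVariationOn_Icc_le_of_abs_sub_le hab
    (F := fun x => Real.sqrt ε * ((hmax ⌊ε⁻¹ * x⌋ : ℝ) - (hmin ⌊ε⁻¹ * x⌋ : ℝ)))
    (fun x _ y _ hxy => ?_) using 2
  · ring
  have hfloor : ⌊ε⁻¹ * x⌋ ≤ ⌊ε⁻¹ * y⌋ := Int.floor_mono (by gcongr)
  have hcast : |((h₁ ⌊ε⁻¹ * y⌋ : ℝ) - h₂ ⌊ε⁻¹ * y⌋) - (h₁ ⌊ε⁻¹ * x⌋ - h₂ ⌊ε⁻¹ * x⌋)| ≤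
      ((hmax ⌊ε⁻¹ * y⌋ : ℝ) - hmin ⌊ε⁻¹ * y⌋) - (hmax ⌊ε⁻¹ * x⌋ - hmin ⌊ε⁻¹ * x⌋) := by
    exact_mod_cast hlattice hfloor
  rw [← mul_sub, ← mul_sub, abs_mul, abs_of_nonneg (Real.sqrt_nonneg ε)]
  exact mul_le_mul_of_nonneg_left hcast (Real.sqrt_nonneg ε)

/-- Prelimit form of Theorem 1.1: the total variation on `[a, b]` of the difference of
the diffusively rescaled height functions of two sandwiched configurations is bounded by
the difference of the rescaled increments of the extreme height functions. -/
theorem eVariationOn_rescaled_height_diff_le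
    (ε : ℝ) (hε : 0 < ε)
    (η₁ η₂ ηmin ηmax : ℤ → ℤ)
    (hη₁ : ∀ x, η₁ x = 0 ∨ η₁ x = 1) (hη₂ : ∀ x, η₂ x = 0 ∨ η₂ x = 1)
    (hηmin : ∀ x, ηmin x = 0 ∨ ηmin x = 1) (hηmax : ∀ x, ηmax x = 0 ∨ ηmax x = 1)
    (hsand : ∀ x : ℤ, ηmin x ≤ min (η₁ x) (η₂ x) ∧ max (η₁ x) (η₂ x) ≤ ηmax x)
    (h₁ h₂ hmin hmax : ℤ → ℤ)
    (hh₁ : ∀ x : ℤ, h₁ x - h₁ (x - 1) = 2 * η₁ x - 1)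
    (hh₂ : ∀ x : ℤ, h₂ x - h₂ (x - 1) = 2 * η₂ x - 1)
    (hhmin : ∀ x : ℤ, hmin x - hmin (x - 1) = 2 * ηmin x - 1)
    (hhmax : ∀ x : ℤ, hmax x - hmax (x - 1) = 2 * ηmax x - 1)
    (a b : ℝ) (hab : a ≤ b) :
    eVariationOn
        (fun x : ℝ => Real.sqrt ε * ((h₁ ⌊ε⁻¹ * x⌋ : ℝ) - (h₂ ⌊ε⁻¹ * x⌋ : ℝ)))
        (Set.Icc a b) ≤
      ENNReal.ofReal (Real.sqrt ε *
        (((hmax ⌊ε⁻¹ * b⌋ : ℝ) - (hmax ⌊ε⁻¹ * a⌋ : ℝ))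
          - ((hmin ⌊ε⁻¹ * b⌋ : ℝ) - (hmin ⌊ε⁻¹ * a⌋ : ℝ)))) :=
  eVariationOn_rescaled_height_diff_le_general ε hε η₁ η₂ ηmin ηmax hsand h₁ h₂ hmin hmax hh₁ hh₂
    hhmin hhmax a b hab
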